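/- arXiv:2507.12826 — 4 statements merged into one kernel-verified Lean document; each statement's English description precedes it below -/
import Mathlib

section
/- Every nonempty subset of S_{(k)} has a least element with respect to the ordering of Definition 3.2; that is, S_{(k)} is well-ordered. -/
/-- Reversed lexicographic comparison of (decreasingly sorted) index lists:
at the first difference, the list with the *larger* entry is *smaller*. -/
def revLexLt : List ℤ → List ℤ → Prop
  | _, [] => False
  | [], _ :: _ => True
  | a :: l₁, b :: l₂ => b < a ∨ (a = b ∧ revLexLt l₁ l₂)

/-- The indices of a monomial (a finite multiset) sorted in decreasing order. -/
def msSortedDesc (s : Multiset ℤ) : List ℤ := (s.sort (· ≤ ·)).reverse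

/-- Maximum of the absolute values of the indices. -/
def msMaxAbs (s : Multiset ℤ) : ℕ := s.toFinset.sup fun i => i.natAbs

/-- The level ordering of Definition 3.2 on monomials in the `s_i`'s, modeled as
finite multisets of nonzero integers. -/
def Mlt (s t : Multiset ℤ) : Prop :=
  Multiset.card s < Multiset.card t ∨
  (Multiset.card s = Multiset.card t ∧
    (msMaxAbs s < msMaxAbs t ∨
      (msMaxAbs s = msMaxAbs t ∧ revLexLt (msSortedDesc s) (msSortedDesc t))))

theorem revLexLt_trichot : ∀ l₁ l₂ : List ℤ, revLexLt l₁ l₂ ∨ l₁ = l₂ ∨ revLexLt l₂ l₁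
  | [], [] => Or.inr (Or.inl rfl)
  | [], _ :: _ => Or.inl trivial
  | _ :: _, [] => Or.inr (Or.inr trivial)
  | a :: l₁, b :: l₂ => by
    rcases lt_trichotomy a b with h | h | h
    · exact Or.inr (Or.inr (Or.inl h))
    · rcases revLexLt_trichot l₁ l₂ with h' | h' | h'
      · exact Or.inl (Or.inr ⟨h, h'⟩)
      · exact Or.inr (Or.inl (by rw [h, h']))
      · exact Or.inr (Or.inr (Or.inr ⟨h.symm, h'⟩))
    · exact Or.inl (Or.inl h)

theorem revLexLt_irrefl : ∀ l : List ℤ, ¬ revLexLt l l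
  | [] => fun h => h
  | a :: l => fun h => by
    rcases h with h | ⟨_, h⟩
    · exact lt_irrefl a h
    · exact revLexLt_irrefl l h

theorem revLexLt_trans : ∀ l₁ l₂ l₃ : List ℤ,
    revLexLt l₁ l₂ → revLexLt l₂ l₃ → revLexLt l₁ l₃
  | _, _, [], _, h2 => absurd h2 (by cases ‹List ℤ› <;> simp [revLexLt])
  | _, [], _ :: _, h1, _ => absurd h1 (by cases ‹List ℤ› <;> simp [revLexLt])
  | [], _ :: _, _ :: _, _, _ => trivial
  | a :: l₁, b :: l₂, c :: l₃, h1, h2 => by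
    rcases h1 with h1 | ⟨e1, h1⟩ <;> rcases h2 with h2 | ⟨e2, h2⟩
    · exact Or.inl (h2.trans h1)
    · exact Or.inl (e2 ▸ h1)
    · exact Or.inl (e1 ▸ h2)
    · exact Or.inr ⟨e1.trans e2, revLexLt_trans l₁ l₂ l₃ h1 h2⟩

theorem msSortedDesc_inj {s t : Multiset ℤ} (h : msSortedDesc s = msSortedDesc t) : s = t := by
  have h2 : s.sort (· ≤ ·) = t.sort (· ≤ ·) := by
    have := congrArg List.reverse h
    simpa [msSortedDesc] using this
  have := congrArg (fun l : List ℤ => (l : Multiset ℤ)) h2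
  simpa [Multiset.sort_eq] using this

theorem natAbs_le_msMaxAbs {s : Multiset ℤ} {i : ℤ} (h : i ∈ s) : i.natAbs ≤ msMaxAbs s :=
  Finset.le_sup (f := fun i : ℤ => i.natAbs) (Multiset.mem_toFinset.2 h)

abbrev Fiber (p : ℕ × ℕ) := {s : Multiset ℤ // Multiset.card s = p.1 ∧ msMaxAbs s = p.2}

instance fiberFinite (p : ℕ × ℕ) : Finite (Fiber p) := by
  obtain ⟨n, M⟩ := p
  apply Finite.of_injective (f := fun s : Fiber (n, M) =>
    fun i : Finset.Icc (-(M : ℤ)) M => (⟨s.1.count i.1, by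
      have := Multiset.count_le_card i.1 s.1
      have hc := s.2.1
      omega⟩ : Fin (n + 1)))
  rintro ⟨s, hs1, hs2⟩ ⟨t, ht1, ht2⟩ h
  simp only at h
  apply Subtype.ext
  ext i
  by_cases hi : i ∈ Finset.Icc (-(M : ℤ)) M
  · have := congrFun h ⟨i, hi⟩
    simpa [Fin.ext_iff] using this
  · have hmem : ∀ u : Multiset ℤ, msMaxAbs u = M → i ∉ u := by
      intro u hu hiu
      have := natAbs_le_msMaxAbs hiu
      rw [hu] at this
      apply hi
      simp only [Finset.mem_Icc]
      omega
    rw [Multiset.count_eq_zero_of_notMem (hmem s hs2),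
        Multiset.count_eq_zero_of_notMem (hmem t ht2)]

def fiberRel (p : ℕ × ℕ) (x y : Fiber p) : Prop := revLexLt (msSortedDesc x.1) (msSortedDesc y.1)

theorem fiberRel_wf (p : ℕ × ℕ) : WellFounded (fiberRel p) := by
  have : IsTrans (Fiber p) (fiberRel p) :=
    ⟨fun a b c => revLexLt_trans (msSortedDesc a.1) (msSortedDesc b.1) (msSortedDesc c.1)⟩
  have : IsIrrefl (Fiber p) (fiberRel p) := ⟨fun a => revLexLt_irrefl (msSortedDesc a.1)⟩
  exact Finite.wellFounded_of_trans_of_irrefl _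

def toSig (s : Multiset ℤ) : (p : ℕ × ℕ) ×' Fiber p :=
  ⟨(Multiset.card s, msMaxAbs s), ⟨s, rfl, rfl⟩⟩


theorem lex_right_of_eq {p q : ℕ × ℕ} {x : Fiber p} {y : Fiber q} (e : p = q)
    (h : revLexLt (msSortedDesc x.1) (msSortedDesc y.1)) :
    PSigma.Lex (Prod.Lex Nat.lt Nat.lt) fiberRel ⟨p, x⟩ ⟨q, y⟩ := by
  subst e; exact PSigma.Lex.right _ h

theorem Mlt_wf : WellFounded Mlt := by
  have hR : WellFounded (PSigma.Lex (Prod.Lex Nat.lt Nat.lt) fiberRel) :=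
    WellFounded.psigma_lex (WellFounded.prod_lex Nat.lt_wfRel.wf Nat.lt_wfRel.wf) fiberRel_wf
  apply Subrelation.wf (r := InvImage (PSigma.Lex (Prod.Lex Nat.lt Nat.lt) fiberRel) toSig)
  · rintro s t (h | ⟨hc, h | ⟨hm, h⟩⟩)
    · exact PSigma.Lex.left _ _ (Prod.Lex.left _ _ h)
    · exact PSigma.Lex.left _ _ (hc ▸ Prod.Lex.right _ h)
    · exact lex_right_of_eq (by rw [hc, hm]) h
  · exact InvImage.wf _ hR

theorem Mlt_trichot (s t : Multiset ℤ) : Mlt s t ∨ s = t ∨ Mlt t s := by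
  rcases lt_trichotomy (Multiset.card s) (Multiset.card t) with hc | hc | hc
  · exact Or.inl (Or.inl hc)
  · rcases lt_trichotomy (msMaxAbs s) (msMaxAbs t) with hm | hm | hm
    · exact Or.inl (Or.inr ⟨hc, Or.inl hm⟩)
    · rcases revLexLt_trichot (msSortedDesc s) (msSortedDesc t) with h | h | h
      · exact Or.inl (Or.inr ⟨hc, Or.inr ⟨hm, h⟩⟩)
      · exact Or.inr (Or.inl (msSortedDesc_inj h))
      · exact Or.inr (Or.inr (Or.inr ⟨hc.symm, Or.inr ⟨hm.symm, h⟩⟩))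
    · exact Or.inr (Or.inr (Or.inr ⟨hc.symm, Or.inl hm⟩))
  · exact Or.inr (Or.inr (Or.inl hc))


/-- Every nonempty subset of `S_{(k)}` (finite multisets of nonzero integers with
element-sum `k`, ordered as in Definition 3.2) has a least element; i.e. `S_{(k)}`
is well-ordered. -/
theorem stmt5 (k : ℤ) (A : Set {s : Multiset ℤ // (0 : ℤ) ∉ s ∧ s.sum = k})
    (hA : A.Nonempty) :
    ∃ m ∈ A, ∀ x ∈ A, m = x ∨ Mlt m.1 x.1 := by
  have hwf : WellFounded (fun a b : {s : Multiset ℤ // (0 : ℤ) ∉ s ∧ s.sum = k} =>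
      Mlt a.1 b.1) := InvImage.wf _ Mlt_wf
  obtain ⟨m, hmA, hmin⟩ := hwf.has_min A hA
  refine ⟨m, hmA, fun x hx => ?_⟩
  rcases Mlt_trichot m.1 x.1 with h | h | h
  · exact Or.inr h
  · exact Or.inl (Subtype.ext h)
  · exact absurd h (hmin x hx)
end

section
/- Let tr be a ℂ(q,z)-linear function on words in commuting variables t, t_1 and an element g_1 satisfying g_1² = (q-1)g_1 + q, t_1 = g_1 t g_1, subject to the Markov trace rules tr(ab)=tr(ba), tr(a g_1) = z·tr(a) for a a power of t, and tr(t'^k a) = s_k tr(a) where t' = g_1 t g_1^{-1}. Then for all p ∈ ℤ and k ∈ ℕ, k ≥ 1: tr(t^p t_1^k g_1) = q^k z s_{p+k} + Σ_{j=0}^{k-1} q^j (q-1) tr(t^{p+j} t_1^{k-j}). -/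
open Finset

/-- Markov trace recursion (Lemma 3.10 (i)): in the generalized Hecke algebra
`H_{1,2}(q)` with `t_1 = g t g` and `t_1' = g t g⁻¹`, for all `p ∈ ℤ` and `k ≥ 1`,
`tr(t^p t_1^k g) = q^k z s_{p+k} + Σ_{j=0}^{k-1} q^j (q-1) tr(t^{p+j} t_1^{k-j})`. -/
theorem stmt6 (F : Type*) [Field F] (q z : F) (s : ℤ → F)
    (A : Type*) [Ring A] [Algebra F A] (t g : Aˣ) (tr : A →ₗ[F] F)
    (hquad : (g : A) ^ 2 = (q - 1) • (g : A) + q • (1 : A))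
    (hbraid : g * t * g * t = t * g * t * g)
    (htrcomm : ∀ a b : A, tr (a * b) = tr (b * a))
    (hs0 : s 0 = 1)
    (htrt : ∀ k : ℤ, tr ((t ^ k : Aˣ) : A) = s k)
    (htrg : ∀ p : ℤ, tr (((t ^ p : Aˣ) : A) * (g : A)) = z * tr ((t ^ p : Aˣ) : A))
    (htrs : ∀ p k : ℤ,
      tr (((t ^ p : Aˣ) : A) * (((g * t * g⁻¹) ^ k : Aˣ) : A))
        = s k * tr ((t ^ p : Aˣ) : A)) :
    ∀ (p : ℤ) (k : ℕ), 1 ≤ k →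
      tr (((t ^ p : Aˣ) : A) * ((g * t * g : Aˣ) : A) ^ k * (g : A))
        = q ^ k * z * s (p + k)
          + ∑ j ∈ range k, q ^ j * (q - 1) *
              tr (((t ^ (p + j) : Aˣ) : A) * ((g * t * g : Aˣ) : A) ^ (k - j)) := by
  have key : ∀ (k : ℕ) (p : ℤ),
      tr (((t ^ p : Aˣ) : A) * ((g * t * g : Aˣ) : A) ^ k * (g : A))
        = q ^ k * z * s (p + k)
          + ∑ j ∈ range k, q ^ j * (q - 1) *
              tr (((t ^ (p + j) : Aˣ) : A) * ((g * t * g : Aˣ) : A) ^ (k - j)) := by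
    intro k
    induction k with
    | zero =>
      intro p
      simp [htrg, htrt]
    | succ k ih =>
      intro p
      set T1 : A := ((g * t * g : Aˣ) : A) with hT1
      have hgg : T1 * (g : A) = (q - 1) • T1 + q • ((g : A) * (t : A)) := by
        have h1 : T1 * (g : A) = (g : A) * (t : A) * ((g : A) ^ 2) := by
          rw [hT1]; push_cast; rw [sq, ← mul_assoc]
        rw [h1, hquad, mul_add, mul_smul_comm, mul_smul_comm, mul_one, hT1]
        push_cast
        rw [mul_assoc]
      have h2 : tr (((t ^ p : Aˣ) : A) * T1 ^ k * ((g : A) * (t : A)))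
          = tr (((t ^ (p + 1) : Aˣ) : A) * T1 ^ k * (g : A)) := by
        have ht : (t : A) * ((t ^ p : Aˣ) : A) = ((t ^ (p + 1) : Aˣ) : A) := by
          rw [← Units.val_mul]
          congr 1
          rw [add_comm, zpow_add, zpow_one]
        rw [← mul_assoc, htrcomm, ← mul_assoc, ← mul_assoc, ht]
      calc tr (((t ^ p : Aˣ) : A) * T1 ^ (k + 1) * (g : A))
          = tr ((q - 1) • (((t ^ p : Aˣ) : A) * T1 ^ k * T1)
              + q • (((t ^ p : Aˣ) : A) * T1 ^ k * ((g : A) * (t : A)))) := by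
            rw [pow_succ, ← mul_assoc, mul_assoc (((t ^ p : Aˣ) : A) * T1 ^ k) T1 (g : A),
              hgg, mul_add, mul_smul_comm, mul_smul_comm]
        _ = (q - 1) * tr (((t ^ p : Aˣ) : A) * T1 ^ (k + 1))
              + q * tr (((t ^ (p + 1) : Aˣ) : A) * T1 ^ k * (g : A)) := by
            rw [map_add, map_smul, map_smul, h2, smul_eq_mul, smul_eq_mul,
              mul_assoc (((t ^ p : Aˣ) : A)) (T1 ^ k) T1, ← pow_succ]
        _ = (q - 1) * tr (((t ^ p : Aˣ) : A) * T1 ^ (k + 1))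
              + q * (q ^ k * z * s (p + 1 + k)
                + ∑ j ∈ range k, q ^ j * (q - 1) *
                    tr (((t ^ (p + 1 + j) : Aˣ) : A) * T1 ^ (k - j))) := by
            rw [ih (p + 1)]
        _ = q ^ (k + 1) * z * s (p + (k + 1 : ℕ))
              + ∑ j ∈ range (k + 1), q ^ j * (q - 1) *
                  tr (((t ^ (p + j) : Aˣ) : A) * T1 ^ (k + 1 - j)) := by
            rw [Finset.sum_range_succ']
            have hsum : ∑ j ∈ range k, q ^ (j + 1) * (q - 1) *
                  tr (((t ^ (p + ((j : ℕ) + 1 : ℕ)) : Aˣ) : A) * T1 ^ (k + 1 - (j + 1)))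
                = ∑ j ∈ range k, q * (q ^ j * (q - 1) *
                    tr (((t ^ (p + 1 + (j : ℕ)) : Aˣ) : A) * T1 ^ (k - j))) := by
              apply Finset.sum_congr rfl
              intro j _
              have e1 : (p + ((j : ℕ) + 1 : ℕ) : ℤ) = p + 1 + (j : ℕ) := by
                push_cast; ring
              rw [e1, Nat.succ_sub_succ]
              ring
            rw [hsum]
            have e2 : p + 1 + (k : ℤ) = p + ((k + 1 : ℕ) : ℤ) := by push_cast; ring
            rw [e2]
            simp only [Nat.cast_zero, add_zero, pow_zero, one_mul, Nat.sub_zero]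
            rw [mul_add, Finset.mul_sum]
            ring
  intro p k _
  exact key k p
end

section
/- Under the same trace hypotheses, for all p ∈ ℤ and k ∈ ℕ, k ≥ 1: tr(t^p t_1^k g_1^{-1}) = q^{k-1} z s_{p+k} + Σ_{j=0}^{k-2} q^j (q-1) tr(t^{p+1+j} t_1^{k-1-j}). -/
open Finset

/-- Markov trace recursion (Lemma 3.10 (ii)): for all `p ∈ ℤ` and `k ≥ 1`,
`tr(t^p t_1^k g⁻¹) = q^{k-1} z s_{p+k} + Σ_{j=0}^{k-2} q^j (q-1) tr(t^{p+1+j} t_1^{k-1-j})`. -/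
theorem stmt7 (F : Type*) [Field F] (q z : F) (s : ℤ → F)
    (A : Type*) [Ring A] [Algebra F A] (t g : Aˣ) (tr : A →ₗ[F] F)
    (hquad : (g : A) ^ 2 = (q - 1) • (g : A) + q • (1 : A))
    (hbraid : g * t * g * t = t * g * t * g)
    (htrcomm : ∀ a b : A, tr (a * b) = tr (b * a))
    (hs0 : s 0 = 1)
    (htrt : ∀ k : ℤ, tr ((t ^ k : Aˣ) : A) = s k)
    (htrg : ∀ p : ℤ, tr (((t ^ p : Aˣ) : A) * (g : A)) = z * tr ((t ^ p : Aˣ) : A))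
    (htrs : ∀ p k : ℤ,
      tr (((t ^ p : Aˣ) : A) * (((g * t * g⁻¹) ^ k : Aˣ) : A))
        = s k * tr ((t ^ p : Aˣ) : A)) :
    ∀ (p : ℤ) (k : ℕ), 1 ≤ k →
      tr (((t ^ p : Aˣ) : A) * ((g * t * g : Aˣ) : A) ^ k * ((g⁻¹ : Aˣ) : A))
        = q ^ (k - 1) * z * s (p + k)
          + ∑ j ∈ range (k - 1), q ^ j * (q - 1) *
              tr (((t ^ (p + 1 + j) : Aˣ) : A)
                * ((g * t * g : Aˣ) : A) ^ (k - 1 - j)) := by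
  set T : A := ((g * t * g : Aˣ) : A) with hT
  -- basic facts
  have hinv : (g : A) * ((g⁻¹ : Aˣ) : A) = 1 := by
    rw [← Units.val_mul, mul_inv_cancel, Units.val_one]
  have hg' : T * ((g⁻¹ : Aˣ) : A) = (g : A) * (t : A) := by
    rw [hT, ← Units.val_mul, mul_inv_cancel_right, Units.val_mul]
  have hgdec : (g : A) = (q - 1) • (1 : A) + q • ((g⁻¹ : Aˣ) : A) := by
    have h2 : ((q - 1) • (g : A) + q • (1 : A)) * ((g⁻¹ : Aˣ) : A) = (g : A) := by
      rw [← hquad, sq, mul_assoc, hinv, mul_one]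
    have h3 : ((q - 1) • (g : A) + q • (1 : A)) * ((g⁻¹ : Aˣ) : A)
        = (q - 1) • (1 : A) + q • ((g⁻¹ : Aˣ) : A) := by
      rw [add_mul, smul_mul_assoc, smul_mul_assoc, hinv, one_mul]
    exact h2.symm.trans h3
  have hcU : Commute (t : Aˣ) (g * t * g) := by
    show (t : Aˣ) * (g * t * g) = (g * t * g) * t
    simpa [mul_assoc] using hbraid.symm
  have hcomm : Commute (t : A) T := by
    simpa [hT] using hcU.map (Units.coeHom A)
  have hz1 : ∀ p : ℤ, ((t ^ (p + 1) : Aˣ) : A) = ((t ^ p : Aˣ) : A) * (t : A) := by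
    intro p; rw [zpow_add_one, Units.val_mul]
  have hz2 : ∀ p : ℤ, ((t ^ (p + 1) : Aˣ) : A) = (t : A) * ((t ^ p : Aˣ) : A) := by
    intro p; rw [add_comm, zpow_one_add, Units.val_mul]
  intro p k hk
  induction k, hk using Nat.le_induction generalizing p with
  | base =>
    simp only [pow_one, Nat.sub_self, range_zero, sum_empty, add_zero, pow_zero, one_mul,
      Nat.cast_one]
    rw [mul_assoc, hg', ← mul_assoc, htrcomm, ← mul_assoc, ← hz2, htrg, htrt]
  | succ n hn ih =>
    obtain ⟨m, rfl⟩ : ∃ m, n = m + 1 := ⟨n - 1, by omega⟩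
    -- key product decomposition
    have h1 : T * ((g⁻¹ : Aˣ) : A) = (q - 1) • (t : A) + q • (((g⁻¹ : Aˣ) : A) * (t : A)) := by
      rw [hg', hgdec, add_mul, smul_mul_assoc, smul_mul_assoc, one_mul]
    have e1 : ((t ^ p : Aˣ) : A) * T ^ (m + 1 + 1) * ((g⁻¹ : Aˣ) : A)
        = (q - 1) • (((t ^ (p + 1) : Aˣ) : A) * T ^ (m + 1))
          + q • ((((t ^ p : Aˣ) : A) * T ^ (m + 1) * ((g⁻¹ : Aˣ) : A)) * (t : A)) := by
      calc ((t ^ p : Aˣ) : A) * T ^ (m + 1 + 1) * ((g⁻¹ : Aˣ) : A)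
          = ((t ^ p : Aˣ) : A) * T ^ (m + 1) * (T * ((g⁻¹ : Aˣ) : A)) := by
            rw [pow_succ, ← mul_assoc, mul_assoc _ T _]
        _ = (q - 1) • (((t ^ p : Aˣ) : A) * T ^ (m + 1) * (t : A))
            + q • (((t ^ p : Aˣ) : A) * T ^ (m + 1) * (((g⁻¹ : Aˣ) : A) * (t : A))) := by
            rw [h1, mul_add, mul_smul_comm, mul_smul_comm]
        _ = (q - 1) • (((t ^ (p + 1) : Aˣ) : A) * T ^ (m + 1))
            + q • ((((t ^ p : Aˣ) : A) * T ^ (m + 1) * ((g⁻¹ : Aˣ) : A)) * (t : A)) := by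
            congr 1
            · congr 1
              rw [mul_assoc, ← (hcomm.pow_right (m + 1)).eq, ← mul_assoc, ← hz1]
            · rw [← mul_assoc]
    rw [e1, map_add, map_smul, map_smul, htrcomm _ (t : A), ← mul_assoc, ← mul_assoc, ← hz2,
      ih (p + 1)]
    have hnat1 : m + 1 + 1 - 1 = m + 1 := rfl
    have hnat2 : m + 1 - 1 = m := rfl
    rw [hnat1, hnat2]
    rw [Finset.sum_range_succ']
    have hf0 : q ^ 0 * (q - 1) *
        tr (((t ^ (p + 1 + (0 : ℕ)) : Aˣ) : A) * T ^ (m + 1 - 0))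
        = (q - 1) * tr (((t ^ (p + 1) : Aˣ) : A) * T ^ (m + 1)) := by
      norm_num
    rw [hf0]
    have hsum : ∀ j ∈ range m,
        q ^ (j + 1) * (q - 1) *
          tr (((t ^ (p + 1 + ((j : ℕ) + 1 : ℕ)) : Aˣ) : A) * T ^ (m + 1 - (j + 1)))
        = q * (q ^ j * (q - 1) *
          tr (((t ^ (p + 1 + 1 + (j : ℕ)) : Aˣ) : A) * T ^ (m + 1 - 1 - j))) := by
      intro j _
      have harg : (p + 1 + ((j : ℕ) + 1 : ℕ) : ℤ) = p + 1 + 1 + (j : ℕ) := by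
        push_cast; ring
      have hnat : m + 1 - (j + 1) = m + 1 - 1 - j := by omega
      rw [harg, hnat]; ring
    rw [Finset.sum_congr rfl hsum]
    have hs : s (p + 1 + (m + 1 : ℕ)) = s (p + (m + 1 + 1 : ℕ)) := by
      congr 1; push_cast; ring
    rw [hs, ← Finset.mul_sum]
    simp only [Nat.add_sub_cancel, smul_eq_mul]
    ring
end

section
/- Under the same trace hypotheses, for every p ∈ ℤ and k ∈ ℕ, k ≥ 1, the trace tr(t^p t_1^k) can be written as a ℂ(q,z)-linear combination Σ_{j=0}^{k} f_j(q,z) s_{p+k-j} s_j of products s_{p+k-j}·s_j (with the convention s_0 = 1), where the coefficients f_j depend only on q, z, and k (not on p). -/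
open Finset

/-- Lemma 3.10 (iv): for every `k ≥ 1` there are coefficients `f_j ∈ ℂ(q,z)`
(independent of `p`) such that, for all `p ∈ ℤ`,
`tr(t^p t_1^k) = Σ_{j=0}^{k} f_j(q,z) s_{p+k-j} s_j` (with the convention `s_0 = 1`). -/
theorem stmt8 (F : Type*) [Field F] (q z : F) (s : ℤ → F)
    (A : Type*) [Ring A] [Algebra F A] (t g : Aˣ) (tr : A →ₗ[F] F)
    (hquad : (g : A) ^ 2 = (q - 1) • (g : A) + q • (1 : A))
    (hbraid : g * t * g * t = t * g * t * g)
    (htrcomm : ∀ a b : A, tr (a * b) = tr (b * a))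
    (hs0 : s 0 = 1)
    (htrt : ∀ k : ℤ, tr ((t ^ k : Aˣ) : A) = s k)
    (htrg : ∀ p : ℤ, tr (((t ^ p : Aˣ) : A) * (g : A)) = z * tr ((t ^ p : Aˣ) : A))
    (htrs : ∀ p k : ℤ,
      tr (((t ^ p : Aˣ) : A) * (((g * t * g⁻¹) ^ k : Aˣ) : A))
        = s k * tr ((t ^ p : Aˣ) : A)) :
    ∀ k : ℕ, 1 ≤ k → ∃ f : ℕ → F, ∀ p : ℤ,
      tr (((t ^ p : Aˣ) : A) * ((g * t * g : Aˣ) : A) ^ k)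
        = ∑ j ∈ range (k + 1), f j * s (p + k - j) * s j := by
  set T1 : A := ((g * t * g : Aˣ) : A) with hT1def
  set T1' : A := ((g * t * g⁻¹ : Aˣ) : A) with hT1'def
  set tp : ℤ → A := fun p => ((t ^ p : Aˣ) : A) with htpdef
  -- sum extension helper
  have hext : ∀ (n N : ℕ) (a : ℕ → F), n ≤ N →
      ∑ j ∈ range n, a j = ∑ j ∈ range N, (if j < n then a j else 0) := by
    intro n N a h
    calc ∑ j ∈ range n, a j = ∑ j ∈ range n, (if j < n then a j else 0) :=
          Finset.sum_congr rfl (fun j hj => (if_pos (mem_range.mp hj)).symm)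
      _ = ∑ j ∈ range N, (if j < n then a j else 0) :=
          Finset.sum_subset (Finset.range_subset_range.mpr h)
            (fun j _ hj => if_neg (fun hlt => hj (mem_range.mpr hlt)))
  -- basic algebra facts
  have hT1e : T1 = (g : A) * (t : A) * (g : A) := by
    rw [hT1def]; simp [Units.val_mul]
  have hgg : (g : A) * (g : A) = (q - 1) • (g : A) + q • (1 : A) := by
    rw [← sq]; exact hquad
  have hgr : (g : A) = (q - 1) • (1 : A) + q • ((g⁻¹ : Aˣ) : A) := by
    have h1 : (g : A) * (g : A) * ((g⁻¹ : Aˣ) : A)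
        = ((q - 1) • (g : A) + q • (1 : A)) * ((g⁻¹ : Aˣ) : A) := by rw [hgg]
    rw [mul_assoc, Units.mul_inv, mul_one, add_mul, smul_mul_assoc, smul_mul_assoc,
      Units.mul_inv, one_mul] at h1
    exact h1
  have hbraidU : Commute t (g * t * g) := by
    show t * (g * t * g) = (g * t * g) * t
    rw [← mul_assoc, ← mul_assoc, ← hbraid]
  have hcommz : ∀ p : ℤ, tp p * T1 = T1 * tp p := by
    intro p
    have c : Commute (t ^ p) (g * t * g) := Commute.zpow_left hbraidU p
    have h2 := congrArg (Units.val) c.eq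
    rw [Units.val_mul, Units.val_mul] at h2
    exact h2
  have hcommk : ∀ (p : ℤ) (k : ℕ), tp p * T1 ^ k = T1 ^ k * tp p := by
    intro p k
    exact Commute.pow_right (hcommz p) k
  have hT1'pow : ∀ m : ℕ, T1' ^ m = (g : A) * (t : A) ^ m * ((g⁻¹ : Aˣ) : A) := by
    intro m
    have h : (g * t * g⁻¹ : Aˣ) ^ m = g * t ^ m * g⁻¹ := conj_pow
    calc T1' ^ m = (((g * t * g⁻¹ : Aˣ) ^ m : Aˣ) : A) := by
          rw [hT1'def, Units.val_pow_eq_pow_val]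
      _ = (g : A) * (t : A) ^ m * ((g⁻¹ : Aˣ) : A) := by
          rw [h]; simp [Units.val_mul, Units.val_pow_eq_pow_val]
  -- key identity (I2)
  have hI2 : ∀ m : ℕ, T1' ^ m * T1
      = q • T1' ^ (m + 1) + (q - 1) • ((g : A) * (t : A) ^ (m + 1)) := by
    intro m
    have h1 : T1' ^ m * T1 = (g : A) * (t : A) ^ (m + 1) * (g : A) := by
      rw [hT1'pow m, hT1e]
      calc (g:A) * (t:A)^m * ((g⁻¹:Aˣ):A) * ((g:A) * (t:A) * (g:A))
          = (g:A) * (t:A)^m * (((g⁻¹:Aˣ):A) * (g:A)) * ((t:A) * (g:A)) := by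
            noncomm_ring
        _ = (g:A) * (t:A)^(m+1) * (g:A) := by
            rw [Units.inv_mul]; rw [pow_succ]; noncomm_ring
    rw [h1, hT1'pow (m+1)]
    nth_rewrite 2 [hgr]
    rw [mul_add, mul_smul_comm, mul_smul_comm, mul_one, add_comm]
  -- key identity (I3)
  have hT1g : T1 * (g:A) = (q-1) • T1 + q • ((g:A) * (t:A)) := by
    rw [hT1e, mul_assoc, hgg, mul_add, mul_smul_comm, mul_smul_comm, mul_one]
  have hI3 : ∀ k : ℕ, T1 ^ (k + 1) * (g : A)
      = (q - 1) • T1 ^ (k + 1) + q • (T1 ^ k * ((g : A) * (t : A))) := by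
    intro k
    calc T1^(k+1) * (g:A) = T1^k * (T1 * (g:A)) := by rw [pow_succ, mul_assoc]
      _ = (q-1) • (T1^k * T1) + q • (T1^k * ((g:A)*(t:A))) := by
          rw [hT1g, mul_add, mul_smul_comm, mul_smul_comm]
      _ = (q-1) • T1^(k+1) + q • (T1^k * ((g:A)*(t:A))) := by rw [← pow_succ]
  -- trace helpers
  have trsmul : ∀ (c : F) (x : A), tr (c • x) = c * tr x := fun c x => by
    rw [map_smul, smul_eq_mul]
  have htfront : ∀ (p : ℤ) (m : ℕ), (t:A)^(m+1) * tp p = tp (p + m + 1) := by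
    intro p m
    simp only [htpdef]
    rw [← Units.val_pow_eq_pow_val, ← Units.val_mul, ← zpow_natCast t (m+1), ← zpow_add]
    congr 2
    push_cast; ring
  have htl : ∀ p : ℤ, (t:A) * tp p = tp (p+1) := by
    intro p
    have h := htfront p 0
    simpa using h
  have hU0 : ∀ (p : ℤ) (m : ℕ), tr (tp p * T1' ^ m) = s m * s p := by
    intro p m
    have hc : T1' ^ m = (((g*t*g⁻¹)^(m:ℤ) : Aˣ) : A) := by
      rw [zpow_natCast, Units.val_pow_eq_pow_val, hT1'def]
    rw [hc]
    simp only [htpdef]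
    rw [htrs, htrt]
  have hQ0 : ∀ p : ℤ, tr (tp p * (g:A)) = z * s p := by
    intro p
    simp only [htpdef]
    rw [htrg, htrt]
  -- recursion for U
  have hUstep : ∀ (m k : ℕ) (p : ℤ),
      tr (tp p * T1' ^ m * T1 ^ (k+1))
        = q * tr (tp p * T1' ^ (m+1) * T1 ^ k)
          + (q-1) * tr (tp (p + m + 1) * T1 ^ k * (g:A)) := by
    intro m k p
    have e0 : tp p * T1' ^ m * T1 ^ (k+1)
        = q • (tp p * T1' ^ (m+1) * T1 ^ k)
          + (q-1) • (tp p * ((g:A) * (t:A)^(m+1) * T1^k)) := by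
      calc tp p * T1' ^ m * T1 ^ (k+1) = tp p * (T1'^m * T1) * T1^k := by
            rw [pow_succ']; noncomm_ring
        _ = tp p * (q • T1' ^ (m + 1) + (q - 1) • ((g : A) * (t : A) ^ (m + 1)))
              * T1^k := by rw [hI2 m]
        _ = q • (tp p * T1' ^ (m+1) * T1 ^ k)
              + (q-1) • (tp p * ((g:A) * (t:A)^(m+1) * T1^k)) := by
            simp only [mul_add, add_mul, mul_smul_comm, smul_mul_assoc, mul_assoc]
    have e2 : tp p * ((g:A) * (t:A)^(m+1) * T1^k)
        = (tp p * (g:A)) * ((t:A)^(m+1) * T1^k) := by noncomm_ring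
    have e3 : (t:A)^(m+1) * T1^k * (tp p * (g:A)) = tp (p + m + 1) * T1^k * (g:A) := by
      calc (t:A)^(m+1) * T1^k * (tp p * (g:A))
          = (t:A)^(m+1) * (T1^k * tp p) * (g:A) := by noncomm_ring
        _ = (t:A)^(m+1) * (tp p * T1^k) * (g:A) := by rw [← hcommk]
        _ = ((t:A)^(m+1) * tp p) * T1^k * (g:A) := by noncomm_ring
        _ = tp (p + m + 1) * T1^k * (g:A) := by rw [htfront]
    have e4 : tr (tp p * ((g:A) * (t:A)^(m+1) * T1^k))
        = tr (tp (p + m + 1) * T1 ^ k * (g:A)) := by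
      rw [e2, htrcomm, e3]
    rw [e0, map_add, trsmul, trsmul, e4]
  -- recursion for G
  have hGstep : ∀ (k : ℕ) (p : ℤ),
      tr (tp p * T1 ^ (k+1) * (g:A))
        = (q-1) * tr (tp p * T1 ^ (k+1)) + q * tr (tp (p+1) * T1 ^ k * (g:A)) := by
    intro k p
    have e0 : tp p * T1 ^ (k+1) * (g:A)
        = (q-1) • (tp p * T1 ^ (k+1)) + q • (tp p * (T1^k * ((g:A)*(t:A)))) := by
      rw [mul_assoc, hI3 k]
      simp only [mul_add, mul_smul_comm]
    have e2 : tp p * (T1^k * ((g:A)*(t:A))) = (tp p * T1^k * (g:A)) * (t:A) := by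
      noncomm_ring
    have e3 : (t:A) * (tp p * T1^k * (g:A)) = tp (p+1) * T1^k * (g:A) := by
      calc (t:A) * (tp p * T1^k * (g:A)) = ((t:A) * tp p) * T1^k * (g:A) := by
            noncomm_ring
        _ = tp (p+1) * T1^k * (g:A) := by rw [htl]
    have e4 : tr (tp p * (T1^k * ((g:A)*(t:A)))) = tr (tp (p+1) * T1 ^ k * (g:A)) := by
      rw [e2, htrcomm, e3]
    rw [e0, map_add, trsmul, trsmul, e4]
  -- main joint induction
  have main : ∀ k : ℕ,
      (∀ m : ℕ, ∃ f : ℕ → F, ∀ p : ℤ,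
        tr (tp p * T1' ^ m * T1 ^ k)
          = ∑ j ∈ range (m + k + 1), f j * s (p + m + k - j) * s j)
      ∧ (∃ f : ℕ → F, ∀ p : ℤ,
        tr (tp p * T1 ^ k * (g:A))
          = ∑ j ∈ range (k + 1), f j * s (p + k - j) * s j) := by
    intro k
    induction k with
    | zero =>
      constructor
      · intro m
        refine ⟨fun j => if j = m then 1 else 0, fun p => ?_⟩
        rw [pow_zero, mul_one, hU0 p m]
        rw [Finset.sum_eq_single m]
        · have h2 : p + (m:ℤ) + ((0:ℕ):ℤ) - (m:ℤ) = p := by push_cast; ring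
          simp [h2, mul_comm]
        · intro b _ hb
          simp [hb]
        · intro h
          exact absurd (mem_range.mpr (by omega)) h
      · refine ⟨fun _ => z, fun p => ?_⟩
        rw [pow_zero, mul_one, hQ0 p]
        simp [Finset.sum_range_one, hs0]
    | succ k IH =>
      obtain ⟨IH1, IH2⟩ := IH
      have P1 : ∀ m : ℕ, ∃ f : ℕ → F, ∀ p : ℤ,
          tr (tp p * T1' ^ m * T1 ^ (k+1))
            = ∑ j ∈ range (m + (k+1) + 1),
                f j * s (p + (m:ℤ) + ((k+1:ℕ):ℤ) - (j:ℤ)) * s j := by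
        intro m
        obtain ⟨f₁, hf₁⟩ := IH1 (m+1)
        obtain ⟨f₂, hf₂⟩ := IH2
        refine ⟨fun j => q * f₁ j + (q-1) * (if j < k + 1 then f₂ j else 0),
          fun p => ?_⟩
        rw [hUstep m k p, hf₁ p, hf₂ (p + m + 1)]
        rw [show m + 1 + k + 1 = m + (k+1) + 1 from by ring]
        rw [hext (k+1) (m + (k+1) + 1) _ (by omega)]
        rw [Finset.mul_sum, Finset.mul_sum, ← Finset.sum_add_distrib]
        refine Finset.sum_congr rfl (fun j hj => ?_)
        push_cast
        split_ifs <;> ring_nf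
      refine ⟨P1, ?_⟩
      obtain ⟨fT, hfT⟩ := P1 0
      obtain ⟨fG, hfG⟩ := IH2
      refine ⟨fun j => (q-1) * fT j + q * (if j < k + 1 then fG j else 0),
        fun p => ?_⟩
      rw [hGstep k p]
      have h0 : tp p * T1 ^ (k+1) = tp p * T1' ^ 0 * T1 ^ (k+1) := by
        rw [pow_zero, mul_one]
      rw [h0, hfT p, hfG (p+1)]
      rw [show 0 + (k+1) + 1 = k + 1 + 1 from by ring]
      rw [hext (k+1) (k + 1 + 1) _ (by omega)]
      rw [Finset.mul_sum, Finset.mul_sum, ← Finset.sum_add_distrib]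
      refine Finset.sum_congr rfl (fun j hj => ?_)
      push_cast
      split_ifs <;> ring_nf
  -- conclusion
  intro k _
  obtain ⟨f, hf⟩ := (main k).1 0
  refine ⟨f, fun p => ?_⟩
  have h := hf p
  rw [pow_zero, mul_one] at h
  rw [show 0 + k + 1 = k + 1 from by ring] at h
  simp only [Nat.cast_zero, add_zero] at h
  exact h
end
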